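/- arXiv:2301.04740 — 4 statements merged into one kernel-verified Lean document; each statement's English description precedes it below -/
import Mathlib

section
/- Lower bound: if v : Finset N → ℝ is monotone and v(∅) = 0, then for every player i, φ_i(v) ≥ v({i})/n, where n = |N|. -/
open Finset

noncomputable def shapley {α : Type*} [Fintype α] [DecidableEq α]
    (v : Finset α → ℝ) (i : α) : ℝ :=
  ∑ S ∈ (Finset.univ.erase i).powerset,
    ((Nat.factorial S.card * Nat.factorial (Fintype.card α - S.card - 1) : ℝ) /
      (Nat.factorial (Fintype.card α))) * (v (insert i S) - v S)

open Nat

lemma cast_factorial_pred_div_factorial {n : ℕ} (hn : n ≠ 0) :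
    ((n - 1)! : ℝ) / n ! = 1 / n := by
  rw [← Nat.mul_factorial_pred hn, Nat.cast_mul]
  field_simp

lemma shapley_term_le_shapley {α : Type*} [Fintype α] [DecidableEq α]
    {v : Finset α → ℝ} (hv : Monotone v) (i : α) {S : Finset α}
    (hS : S ∈ (univ.erase i).powerset) :
    ((S.card ! * (Fintype.card α - S.card - 1)! : ℝ) / (Fintype.card α)!) *
      (v (insert i S) - v S) ≤ shapley v i := by
  apply single_le_sum (f := fun T ↦ ((T.card ! * (Fintype.card α - T.card - 1)! : ℝ) /
    (Fintype.card α)!) * (v (insert i T) - v T)) _ hS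
  exact fun T _ ↦ mul_nonneg (by positivity) (sub_nonneg.2 (hv (subset_insert i T)))

theorem shapley_lower_bound_general {α : Type*} [Fintype α] [DecidableEq α]
    (v : Finset α → ℝ)
    (hmono : ∀ S T : Finset α, S ⊆ T → v S ≤ v T)
    (hv0 : v ∅ = 0) (i : α) :
    v {i} / (Fintype.card α : ℝ) ≤ shapley v i := by
  have hn : Fintype.card α ≠ 0 := (Fintype.card_pos_iff.2 ⟨i⟩).ne'
  have h := shapley_term_le_shapley hmono i (empty_mem_powerset _)
  rwa [card_empty, factorial_zero, Nat.cast_one, one_mul, Nat.sub_zero,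
    cast_factorial_pred_div_factorial hn, insert_empty_eq, hv0, sub_zero, one_div_mul_eq_div] at h

theorem shapley_lower_bound {α : Type*} [Fintype α] [DecidableEq α]
    (hcard : 1 ≤ Fintype.card α) (v : Finset α → ℝ)
    (hmono : ∀ S T : Finset α, S ⊆ T → v S ≤ v T)
    (hv0 : v ∅ = 0) (i : α) :
    v {i} / (Fintype.card α : ℝ) ≤ shapley v i :=
  shapley_lower_bound_general v hmono hv0 i
end

section
/- If v is monotone with v(∅) = 0 and values in [0,1], and φ_i(v) = 1 for some player i, then v({i}) = 1 and every other player j ≠ i is a null player (φ_j(v) = 0). -/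
open Finset

/-!
The Shapley weights are positive and sum to one, and a player's marginal contributions are at
most one when `v` takes values in `[0, 1]`. So `φ_i(v) = 1` forces every marginal contribution of
`i` to be exactly one, i.e. `v S = 0` and `v (S ∪ {i}) = 1` whenever `i ∉ S`. Then `v` is the
unanimity game of `{i}`, in which every other player is null.
-/

open Nat

noncomputable def shapleyWeight (n k : ℕ) : ℝ := (k ! * (n - k - 1)! : ℝ) / n !

lemma shapley_eq_sum_shapleyWeight {α : Type*} [Fintype α] [DecidableEq α]
    (v : Finset α → ℝ) (i : α) :
    shapley v i = ∑ S ∈ (univ.erase i).powerset,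
      shapleyWeight (Fintype.card α) #S * (v (insert i S) - v S) :=
  rfl

lemma shapleyWeight_pos (n k : ℕ) : 0 < shapleyWeight n k := by
  unfold shapleyWeight
  positivity

lemma choose_mul_shapleyWeight {m k : ℕ} (hk : k ≤ m) :
    (m.choose k : ℝ) * shapleyWeight (m + 1) k = 1 / (m + 1) := by
  rw [shapleyWeight, Nat.cast_choose ℝ hk, Nat.sub_right_comm, Nat.add_sub_cancel, Nat.factorial_succ]
  push_cast
  field_simp

lemma sum_powerset_shapleyWeight {β : Type*} (s : Finset β) :
    ∑ t ∈ s.powerset, shapleyWeight (#s + 1) #t = 1 := by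
  rw [sum_powerset_apply_card]
  calc ∑ k ∈ range (#s + 1), (#s).choose k • shapleyWeight (#s + 1) k
      = ∑ _k ∈ range (#s + 1), (1 / (#s + 1) : ℝ) :=
        sum_congr rfl fun k hk => by
          rw [nsmul_eq_mul, choose_mul_shapleyWeight (Nat.lt_succ_iff.mp (mem_range.mp hk))]
    _ = 1 := by
      rw [sum_const, card_range, nsmul_eq_mul]
      push_cast
      field_simp

lemma sum_shapleyWeight {α : Type*} [Fintype α] [DecidableEq α] (i : α) :
    ∑ S ∈ (univ.erase i).powerset, shapleyWeight (Fintype.card α) #S = 1 := by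
  have hcard : Fintype.card α = #(univ.erase i) + 1 := by
    rw [card_erase_of_mem (mem_univ i), Finset.card_univ, Nat.sub_add_cancel (Fintype.card_pos_iff.mpr ⟨i⟩)]
  rw [hcard]
  exact sum_powerset_shapleyWeight _

lemma eq_one_of_sum_mul_eq_one {ι 𝕜 : Type*} [Field 𝕜] [LinearOrder 𝕜] [IsStrictOrderedRing 𝕜]
    {s : Finset ι} {w f : ι → 𝕜} (hw : ∀ x ∈ s, 0 < w x) (hf : ∀ x ∈ s, f x ≤ 1)
    (hw1 : ∑ x ∈ s, w x = 1) (h : ∑ x ∈ s, w x * f x = 1) : ∀ x ∈ s, f x = 1 := by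
  have hle : ∀ x ∈ s, w x * f x ≤ w x := fun x hx =>
    mul_le_of_le_one_right (hw x hx).le (hf x hx)
  have heq := (sum_eq_sum_iff_of_le hle).mp (h.trans hw1.symm)
  intro x hx
  exact mul_left_cancel₀ (hw x hx).ne' ((heq x hx).trans (mul_one _).symm)

section ShapleyEqOne

variable {α : Type*} [Fintype α] [DecidableEq α] {v : Finset α → ℝ} {i : α}

lemma marginal_eq_one_of_shapley_eq_one (hrange : ∀ S : Finset α, 0 ≤ v S ∧ v S ≤ 1)
    (hi : shapley v i = 1) (S : Finset α) (hS : i ∉ S) : v (insert i S) - v S = 1 := by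
  rw [shapley_eq_sum_shapleyWeight] at hi
  refine eq_one_of_sum_mul_eq_one (fun _ _ => shapleyWeight_pos _ _) (fun T _ => ?_)
    (sum_shapleyWeight i) hi S (mem_powerset.mpr fun x hx => mem_erase.mpr ⟨?_, mem_univ x⟩)
  · linarith [(hrange (insert i T)).2, (hrange T).1]
  · rintro rfl
    exact hS hx

lemma apply_eq_ite_of_shapley_eq_one (hrange : ∀ S : Finset α, 0 ≤ v S ∧ v S ≤ 1)
    (hi : shapley v i = 1) (T : Finset α) : v T = if i ∈ T then 1 else 0 := by
  split_ifs with hT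
  · have h := marginal_eq_one_of_shapley_eq_one hrange hi (T.erase i) (notMem_erase i T)
    rw [insert_erase hT] at h
    linarith [(hrange T).2, (hrange (T.erase i)).1]
  · have h := marginal_eq_one_of_shapley_eq_one hrange hi T hT
    linarith [(hrange T).1, (hrange (insert i T)).2]

end ShapleyEqOne

lemma shapley_eq_zero_of_forall_insert_eq {α : Type*} [Fintype α] [DecidableEq α]
    {v : Finset α → ℝ} {j : α} (hnull : ∀ S, v (insert j S) = v S) : shapley v j = 0 :=
  sum_eq_zero fun S _ => by rw [hnull, sub_self, mul_zero]

theorem shapley_eq_one_general {α : Type*} [Fintype α] [DecidableEq α]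
    (v : Finset α → ℝ)
    (hrange : ∀ S : Finset α, 0 ≤ v S ∧ v S ≤ 1)
    (i : α) (hi : shapley v i = 1) :
    v {i} = 1 ∧ ∀ j : α, j ≠ i → shapley v j = 0 := by
  have hv := apply_eq_ite_of_shapley_eq_one hrange hi
  refine ⟨by simpa using hv {i}, fun j hj => shapley_eq_zero_of_forall_insert_eq fun S => ?_⟩
  simp only [hv, mem_insert, hj.symm, false_or]

theorem shapley_eq_one {α : Type*} [Fintype α] [DecidableEq α]
    (hcard : 1 ≤ Fintype.card α) (v : Finset α → ℝ)
    (hmono : ∀ S T : Finset α, S ⊆ T → v S ≤ v T)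
    (hv0 : v ∅ = 0) (hrange : ∀ S : Finset α, 0 ≤ v S ∧ v S ≤ 1)
    (i : α) (hi : shapley v i = 1) :
    v {i} = 1 ∧ ∀ j : α, j ≠ i → shapley v j = 0 :=
  shapley_eq_one_general v hrange i hi
end

section
/- Maximal Shapley value of a fully informative player: if v is monotone with values in [0,1] and player x satisfies v(S) = 1 for every S containing x (in particular v({x}) = 1), then φ_i(v) ≤ φ_x(v) for every player i. -/
open Finset

theorem shapley_max_of_fully_informative {α : Type*} [Fintype α] [DecidableEq α]
    (hcard : 1 ≤ Fintype.card α) (v : Finset α → ℝ)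
    (hmono : ∀ S T : Finset α, S ⊆ T → v S ≤ v T)
    (hrange : ∀ S : Finset α, 0 ≤ v S ∧ v S ≤ 1)
    (x : α) (hfull : ∀ S : Finset α, v (insert x S) = 1) (i : α) :
    shapley v i ≤ shapley v x := by
  classical
  rcases eq_or_ne i x with rfl | hne
  · exact le_refl _
  set c : Finset α → ℝ := fun S =>
    (Nat.factorial S.card * Nat.factorial (Fintype.card α - S.card - 1) : ℝ) /
      (Nat.factorial (Fintype.card α)) with hcdef
  have hc : ∀ S : Finset α, 0 ≤ c S := by
    intro S; rw [hcdef]; positivity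
  have hfull' : ∀ S : Finset α, x ∈ S → v S = 1 := by
    intro S hx; rw [← Finset.insert_eq_self.mpr hx, hfull]
  have step1 : shapley v i ≤ ∑ S ∈ ((univ : Finset α) \ {i, x}).powerset, c S * (1 - v S) := by
    have h1 : ∀ S ∈ (univ.erase i).powerset,
        c S * (v (insert i S) - v S) ≤ (if x ∈ S then 0 else c S * (1 - v S)) := by
      intro S _
      by_cases hx : x ∈ S
      · simp only [hx, if_true]
        have h1 : v (insert i S) = 1 := hfull' _ (mem_insert_of_mem hx)
        have h2 : v S = 1 := hfull' _ hx
        rw [h1, h2]; simp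
      · simp only [hx, if_false]
        apply mul_le_mul_of_nonneg_left _ (hc S)
        have := (hrange (insert i S)).2
        linarith
    have hset : (univ.erase i).powerset.filter (fun S => ¬ x ∈ S)
        = ((univ : Finset α) \ {i, x}).powerset := by
      ext S
      simp only [mem_filter, mem_powerset, Finset.subset_erase, Finset.subset_sdiff,
        Finset.disjoint_insert_right, Finset.disjoint_singleton_right, Finset.subset_univ,
        true_and]
    calc shapley v i ≤ ∑ S ∈ (univ.erase i).powerset, (if x ∈ S then 0 else c S * (1 - v S)) :=
          Finset.sum_le_sum h1
      _ = ∑ S ∈ (univ.erase i).powerset.filter (fun S => ¬ x ∈ S), c S * (1 - v S) := by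
          rw [Finset.sum_filter]
          apply Finset.sum_congr rfl
          intro S _
          by_cases hx : x ∈ S <;> simp [hx]
      _ = _ := by rw [hset]
  have step2 : ∑ S ∈ ((univ : Finset α) \ {i, x}).powerset, c S * (1 - v S) ≤ shapley v x := by
    have heq : shapley v x = ∑ S ∈ (univ.erase x).powerset, c S * (1 - v S) := by
      unfold shapley
      apply Finset.sum_congr rfl
      intro S _
      rw [hfull S]
    rw [heq]
    apply Finset.sum_le_sum_of_subset_of_nonneg
    · apply Finset.powerset_mono.mpr
      intro a ha
      simp only [Finset.mem_sdiff, Finset.mem_insert, Finset.mem_singleton] at ha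
      simp [Finset.mem_erase]
      tauto
    · intro S _ _
      have := (hrange S).2
      have := hc S
      nlinarith
  exact le_trans step1 step2
end

section
/- Cloning does not increase the Shapley value: let v be a monotone characteristic function on subsets of N ∪ {c}, where player c is a clone of player x in the sense that v(S ∪ {c}) = v(S ∪ {x}) and v(S ∪ {x, c}) = v(S ∪ {x}) for all S ⊆ N\{x}. Then the Shapley value of x in the (n+1)-player game on N ∪ {c} is at most the Shapley value of x in the n-player game on N (with v restricted to subsets of N). -/
open Finset

noncomputable def shapleyOn {α : Type*} [DecidableEq α]
    (M : Finset α) (v : Finset α → ℝ) (i : α) : ℝ :=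
  ∑ S ∈ (M.erase i).powerset,
    ((Nat.factorial S.card * Nat.factorial (M.card - S.card - 1) : ℝ) /
      (Nat.factorial M.card)) * (v (insert i S) - v S)

theorem shapley_cloning_not_increase {α : Type*} [Fintype α] [DecidableEq α]
    (x c : α) (hxc : x ≠ c)
    (hcard : 1 ≤ (Finset.univ.erase c).card)
    (v : Finset α → ℝ)
    (hmono : ∀ S T : Finset α, S ⊆ T → v S ≤ v T)
    (hclone : ∀ S : Finset α, x ∉ S → c ∉ S →
      v (insert c S) = v (insert x S) ∧
      v (insert c (insert x S)) = v (insert x S)) :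
    shapleyOn Finset.univ v x ≤ shapleyOn (Finset.univ.erase c) v x := by
  classical
  set N := (Finset.univ : Finset α).erase c with hN
  have hxN : x ∈ N := mem_erase.2 ⟨hxc, mem_univ x⟩
  set E := N.erase x with hE
  have hxE : x ∉ E := notMem_erase x N
  have hcE : c ∉ E := fun h => notMem_erase c Finset.univ (mem_of_mem_erase h)
  have hkey : (Finset.univ : Finset α).erase x = insert c E := by
    ext a
    simp only [hE, hN, mem_erase, mem_insert, mem_univ, and_true]
    constructor
    · intro ha
      rcases eq_or_ne a c with h | h
      · exact Or.inl h
      · exact Or.inr ⟨ha, h⟩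
    · rintro (rfl | ⟨h1, h2⟩)
      · exact hxc.symm
      · exact h1
  have hNcard : N.card + 1 = (Finset.univ : Finset α).card := by
    have h1 : N.card = (Finset.univ : Finset α).card - 1 := by
      rw [hN, card_erase_of_mem (mem_univ c)]
    have h2 : 1 ≤ (Finset.univ : Finset α).card :=
      card_pos.2 ⟨x, mem_univ x⟩
    omega
  have hEcard : E.card + 1 = N.card := by
    have h1 : E.card = N.card - 1 := by rw [hE, card_erase_of_mem hxN]
    omega
  unfold shapleyOn
  rw [hkey, show N.erase x = E from hE.symm, Finset.sum_powerset_insert hcE]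
  have h2 : ∑ S ∈ E.powerset,
      ((Nat.factorial (insert c S).card *
        Nat.factorial ((Finset.univ : Finset α).card - (insert c S).card - 1) : ℝ) /
        (Nat.factorial (Finset.univ : Finset α).card)) *
        (v (insert x (insert c S)) - v (insert c S)) = 0 := by
    apply Finset.sum_eq_zero
    intro S hS
    have hS' := mem_powerset.1 hS
    have hxS : x ∉ S := fun h => hxE (hS' h)
    have hcS : c ∉ S := fun h => hcE (hS' h)
    obtain ⟨hc1, hc2⟩ := hclone S hxS hcS
    rw [Finset.insert_comm, hc2, hc1, sub_self, mul_zero]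
  rw [h2, add_zero]
  apply Finset.sum_le_sum
  intro S hS
  have hSE := mem_powerset.1 hS
  have hd : 0 ≤ v (insert x S) - v S :=
    sub_nonneg.2 (hmono S _ (subset_insert x S))
  apply mul_le_mul_of_nonneg_right _ hd
  set n := N.card with hn
  set s := S.card with hs
  have hsle : s + 1 ≤ n := by
    have := card_le_card hSE
    omega
  have hm : (Finset.univ : Finset α).card = n + 1 := hNcard.symm
  rw [hm]
  have hrw : n + 1 - s - 1 = n - s := by omega
  rw [hrw]
  rw [div_le_div_iff₀ (by positivity) (by positivity)]
  have key : Nat.factorial s * Nat.factorial (n - s) * Nat.factorial n ≤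
      Nat.factorial s * Nat.factorial (n - s - 1) * Nat.factorial (n + 1) := by
    have h1 : n - s = (n - s - 1) + 1 := by omega
    rw [h1, Nat.factorial_succ, Nat.factorial_succ]
    have h3 : n - s - 1 + 1 ≤ n + 1 := by omega
    calc Nat.factorial s * ((n - s - 1 + 1) * Nat.factorial (n - s - 1)) * Nat.factorial n
        = (n - s - 1 + 1) * (Nat.factorial s * Nat.factorial (n - s - 1) * Nat.factorial n) := by ring
      _ ≤ (n + 1) * (Nat.factorial s * Nat.factorial (n - s - 1) * Nat.factorial n) :=
          Nat.mul_le_mul_right _ h3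
      _ = Nat.factorial s * Nat.factorial (n - s - 1) * ((n + 1) * Nat.factorial n) := by ring
  exact_mod_cast key
end
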